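/- arXiv:quant-ph/0007098 — 6 statements merged into one kernel-verified Lean document; each statement's English description precedes it below -/
import Mathlib

section
/- For any complex numbers x, y, z, t, there exist real numbers θ and ω such that (x − t) · cos (2θ) + sin (2θ) · (y · exp (−I·ω) + z · exp (I·ω)) = 0. -/
/-!
Put `a = x - t` and `S ω = y e^{-iω} + z e^{iω}`. Since `S (ω + π) = -S ω`, the continuous real
function `ω ↦ Im (conj a · S ω)` changes sign over `[0, π]` and so vanishes somewhere. There `a`
and `S ω` are real-linearly dependent, and any nontrivial real relation `p a + q S = 0` can be
rescaled to one whose coefficients `(cos 2θ, sin 2θ)` lie on the unit circle.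
-/

open Complex ComplexConjugate

theorem Function.Antiperiodic.exists_eq_zero {X α : Type*} [TopologicalSpace X]
    [PreconnectedSpace X] [AddZeroClass X] [AddCommGroup α] [LinearOrder α]
    [IsOrderedAddMonoid α] [TopologicalSpace α] [OrderClosedTopology α] {f : X → α} {c : X}
    (hf : Function.Antiperiodic f c) (hcont : Continuous f) : ∃ x, f x = 0 := by
  rcases le_total (f 0) 0 with h | h
  · exact intermediate_value_univ 0 c hcont ⟨h, by rw [hf.eq]; exact neg_nonneg.2 h⟩
  · exact intermediate_value_univ c 0 hcont ⟨by rw [hf.eq]; exact neg_nonpos.2 h, h⟩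

theorem exists_cos_smul_add_sin_smul_eq_zero {E : Type*} [AddCommGroup E] [Module ℝ E]
    {u v : E} {p q : ℝ} (hpq : p ≠ 0 ∨ q ≠ 0) (h : p • u + q • v = 0) :
    ∃ φ : ℝ, Real.cos φ • u + Real.sin φ • v = 0 := by
  set w : ℂ := ⟨p, q⟩
  have hw : ‖w‖ ≠ 0 := by
    rw [norm_ne_zero_iff]
    rintro hw0
    rcases hpq with hp | hq
    · exact hp (congrArg re hw0)
    · exact hq (congrArg im hw0)
  refine ⟨arg w, (smul_eq_zero.1 ?_).resolve_left hw⟩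
  rwa [smul_add, smul_smul, smul_smul, norm_mul_cos_arg, norm_mul_sin_arg]

theorem exists_cos_smul_add_sin_smul_eq_zero_of_im_conj_mul_eq_zero {a b : ℂ}
    (h : (conj a * b).im = 0) : ∃ φ : ℝ, Real.cos φ • a + Real.sin φ • b = 0 := by
  rcases eq_or_ne a 0 with rfl | ha
  · exact exists_cos_smul_add_sin_smul_eq_zero (p := 1) (q := 0) (by simp) (by simp)
  · refine exists_cos_smul_add_sin_smul_eq_zero (p := -(conj a * b).re) (q := normSq a)
      (.inr (normSq_pos.2 ha).ne') ?_
    have hreal : ((conj a * b).re : ℂ) = conj a * b := by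
      conv_rhs => rw [← re_add_im (conj a * b), h]
      simp
    rw [real_smul, real_smul, ofReal_neg, hreal, ← mul_conj]
    ring

noncomputable def phaseSum (y z : ℂ) (ω : ℝ) : ℂ :=
  y * exp (-I * ω) + z * exp (I * ω)

theorem antiperiodic_phaseSum (y z : ℂ) : Function.Antiperiodic (phaseSum y z) Real.pi := by
  intro ω
  have h₁ : exp (-I * ↑(ω + Real.pi)) = -exp (-I * ω) := by
    rw [← exp_sub_pi_mul_I]; congr 1; push_cast; ring
  have h₂ : exp (I * ↑(ω + Real.pi)) = -exp (I * ω) := by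
    rw [← exp_add_pi_mul_I]; congr 1; push_cast; ring
  rw [phaseSum, phaseSum, h₁, h₂]
  ring

theorem continuous_phaseSum (y z : ℂ) : Continuous (phaseSum y z) := by
  unfold phaseSum
  fun_prop

theorem exists_im_conj_mul_phaseSum_eq_zero (a y z : ℂ) :
    ∃ ω : ℝ, (conj a * phaseSum y z ω).im = 0 :=
  Function.Antiperiodic.exists_eq_zero
    (fun ω ↦ by rw [antiperiodic_phaseSum, mul_neg, neg_im])
    (continuous_im.comp (continuous_const.mul (continuous_phaseSum y z)))

/-- The key solvability claim in the 2×2 equidiagonalization proof: for any complex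
`x, y, z, t` there are real angles `θ`, `ω` with
`(x − t)·cos 2θ + sin 2θ·(y·e^{−iω} + z·e^{iω}) = 0`. -/
theorem exists_angles_equidiagonalize (x y z t : ℂ) :
    ∃ θ ω : ℝ,
      (x - t) * (Real.cos (2 * θ) : ℝ) +
        (Real.sin (2 * θ) : ℝ) * (y * Complex.exp (-Complex.I * (ω : ℂ)) +
          z * Complex.exp (Complex.I * (ω : ℂ))) = 0 := by
  obtain ⟨ω, hω⟩ := exists_im_conj_mul_phaseSum_eq_zero (x - t) y z
  obtain ⟨φ, hφ⟩ := exists_cos_smul_add_sin_smul_eq_zero_of_im_conj_mul_eq_zero hω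
  refine ⟨φ / 2, ω, ?_⟩
  rw [mul_div_cancel₀ φ two_ne_zero]
  rw [real_smul, real_smul] at hφ
  linear_combination (norm := (unfold phaseSum; ring)) hφ
end

section
/- For every 2×2 complex matrix M, there exists a 2×2 unitary matrix U such that the two diagonal entries of U * M * Uᴴ are equal (equivalently, both equal trace M / 2). -/
/-!
Subtracting `(trace M / 2) • 1`, which commutes with every unitary conjugation, reduces the
problem to a traceless `N`. Then the two diagonal entries of `U N Uᴴ` sum to `0`, so it suffices
to make the first one, `v* N v` for the unit vector `v = star (U 0)`, vanish; any unit vector of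
`ℂ²` is the (conjugated) first row of a unitary `!![a̅, b̅; -b, a]`.

For traceless `N`, `v* N v` depends real-linearly on the Bloch coordinates
`(|v₀|² - |v₁|², v̅₀ v₁) ∈ ℝ × ℂ ≅ ℝ³` of `v`, so the resulting real-linear map `ℝ³ → ℝ²` has
a nonzero kernel vector; and every nonzero point of `ℝ × ℂ` is, up to a positive factor, the
Bloch coordinates of some vector (a lift through the Hopf map).
-/

open scoped Matrix ComplexConjugate ComplexOrder

namespace Matrix

variable {n α : Type*} [Fintype n]

theorem mul_mul_conjTranspose_apply_self [CommSemiring α] [StarRing α] (U M : Matrix n n α)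
    (i : n) : (U * M * Uᴴ) i i = U i ⬝ᵥ M *ᵥ star (U i) :=
  mul_mul_apply U M Uᴴ i i

theorem exists_star_dotProduct_self_eq_one {v : n → ℂ} (hv : v ≠ 0) :
    ∃ c : ℝ, star (c • v) ⬝ᵥ (c • v) = 1 := by
  obtain ⟨hre, him⟩ := Complex.pos_iff.mp (dotProduct_star_self_pos_iff.mpr hv)
  set s := (star v ⬝ᵥ v).re
  have hs : star v ⬝ᵥ v = s := Complex.ext rfl him.symm
  refine ⟨(√s)⁻¹, ?_⟩
  rw [star_smul, smul_dotProduct, dotProduct_smul, hs, star_trivial, smul_smul, ← mul_inv,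
    Real.mul_self_sqrt hre.le, Complex.real_smul, ← Complex.ofReal_mul, inv_mul_cancel₀ hre.ne',
    Complex.ofReal_one]

section UnitaryConj

variable [DecidableEq n] [CommRing α] [StarRing α] {U : Matrix n n α}

theorem trace_mul_mul_conjTranspose_of_mem_unitaryGroup (hU : U ∈ unitaryGroup n α)
    (M : Matrix n n α) : (U * M * Uᴴ).trace = M.trace := by
  rw [trace_mul_cycle, ← star_eq_conjTranspose, mem_unitaryGroup_iff'.mp hU, one_mul]

theorem mul_sub_smul_one_mul_conjTranspose_of_mem_unitaryGroup (hU : U ∈ unitaryGroup n α)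
    (M : Matrix n n α) (c : α) : U * (M - c • 1) * Uᴴ = U * M * Uᴴ - c • 1 := by
  rw [mul_sub, sub_mul, Matrix.mul_smul, mul_one, Matrix.smul_mul, ← star_eq_conjTranspose,
    mem_unitaryGroup_iff.mp hU]

end UnitaryConj

theorem of_fin_two_mem_unitaryGroup [CommRing α] [StarRing α] {a b : α}
    (h : star a * a + star b * b = 1) : !![star a, star b; -b, a] ∈ unitaryGroup (Fin 2) α := by
  rw [mem_unitaryGroup_iff, star_eq_conjTranspose]
  ext i j
  fin_cases i <;> fin_cases j <;>
    simp only [Fin.zero_eta, Fin.mk_one, Fin.isValue, mul_apply, of_apply, cons_val',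
      cons_val_fin_one, cons_val_zero, cons_val_one, conjTranspose_apply, Fin.sum_univ_two,
      star_star, star_neg, mul_neg, neg_mul, neg_neg, one_apply_eq, one_apply_ne, ne_eq,
      zero_ne_one, one_ne_zero, not_false_eq_true] <;>
    first | ring1 | linear_combination h

/-- For a traceless `N`, `star v ⬝ᵥ N *ᵥ v` is this form evaluated at the Bloch coordinates
`(‖v 0‖² - ‖v 1‖², conj (v 0) * v 1)` of `v`. -/
def blochForm (N : Matrix (Fin 2) (Fin 2) ℂ) : ℝ × ℂ →ₗ[ℝ] ℂ where
  toFun p := p.1 * N 0 0 + p.2 * N 0 1 + conj p.2 * N 1 0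
  map_add' p q := by simp only [Prod.fst_add, Prod.snd_add, Complex.ofReal_add, map_add]; ring
  map_smul' c p := by
    simp only [Prod.smul_fst, Prod.smul_snd, smul_eq_mul, Complex.real_smul, Complex.ofReal_mul,
      map_mul, Complex.conj_ofReal, RingHom.id_apply]
    ring

theorem exists_ne_zero_blochForm_eq_zero (N : Matrix (Fin 2) (Fin 2) ℂ) :
    ∃ p : ℝ × ℂ, p ≠ 0 ∧ 0 ≤ p.1 ∧ blochForm N p = 0 := by
  have hker : LinearMap.ker (blochForm N) ≠ ⊥ := LinearMap.ker_ne_bot_of_finrank_lt <| by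
    rw [Module.finrank_prod, Module.finrank_self, Complex.finrank_real_complex]; norm_num
  obtain ⟨p, hp, hp0⟩ := (Submodule.ne_bot_iff _).mp hker
  rcases le_total 0 p.1 with h | h
  · exact ⟨p, hp0, h, hp⟩
  · exact ⟨-p, neg_ne_zero.mpr hp0, by simpa using h, by simpa using hp⟩

/-- `![r + d, 2 w]`, with `r = √(d² + 4 ‖w‖²)`, lifts `(d, w)` through the Hopf map: its Bloch
coordinates are `2 (r + d) • (d, w)`. -/
theorem star_dotProduct_mulVec_eq_blochForm {N : Matrix (Fin 2) (Fin 2) ℂ} (hN : N.trace = 0)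
    (d r : ℝ) (w : ℂ) (hr : r ^ 2 = d ^ 2 + 4 * ‖w‖ ^ 2) :
    star ![((r + d : ℝ) : ℂ), 2 * w] ⬝ᵥ N *ᵥ ![((r + d : ℝ) : ℂ), 2 * w] =
      2 * (r + d) * blochForm N (d, w) := by
  rw [trace_fin_two] at hN
  have hr' : (r : ℂ) ^ 2 = d ^ 2 + 4 * (conj w * w) := by
    rw [Complex.conj_mul']; exact_mod_cast hr
  simp only [dotProduct, mulVec, Fin.sum_univ_two, Pi.star_apply, RCLike.star_def, cons_val_zero,
    cons_val_one, cons_val_fin_one, Complex.ofReal_add, map_add, map_mul, map_ofNat,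
    Complex.conj_ofReal, blochForm, LinearMap.coe_mk, AddHom.coe_mk]
  linear_combination N 0 0 * hr' + 4 * conj w * w * hN

theorem exists_ne_zero_star_dotProduct_mulVec_eq_zero {N : Matrix (Fin 2) (Fin 2) ℂ}
    (hN : N.trace = 0) : ∃ v ≠ 0, star v ⬝ᵥ N *ᵥ v = 0 := by
  obtain ⟨⟨d, w⟩, hp0, hd : 0 ≤ d, hp⟩ := exists_ne_zero_blochForm_eq_zero N
  set r := √(d ^ 2 + 4 * ‖w‖ ^ 2)
  have hr : 0 < r := Real.sqrt_pos.mpr <| by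
    rcases eq_or_ne w 0 with rfl | hw
    · have hd0 : d ≠ 0 := by rintro rfl; exact hp0 rfl
      positivity
    · positivity
  refine ⟨![((r + d : ℝ) : ℂ), 2 * w], fun hv => ?_, ?_⟩
  · have h0 : ((r + d : ℝ) : ℂ) = 0 := congrFun hv 0
    linarith [Complex.ofReal_eq_zero.mp h0]
  · rw [star_dotProduct_mulVec_eq_blochForm hN d r w (Real.sq_sqrt (by positivity)), hp,
      mul_zero]

theorem exists_mem_unitaryGroup_mul_mul_conjTranspose_apply_zero_zero_eq_zero
    {N : Matrix (Fin 2) (Fin 2) ℂ} (hN : N.trace = 0) :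
    ∃ U ∈ unitaryGroup (Fin 2) ℂ, (U * N * Uᴴ) 0 0 = 0 := by
  obtain ⟨v, hv, hQ⟩ := exists_ne_zero_star_dotProduct_mulVec_eq_zero hN
  obtain ⟨c, hc⟩ := exists_star_dotProduct_self_eq_one hv
  set u := c • v
  refine ⟨_, of_fin_two_mem_unitaryGroup (a := u 0) (b := u 1) ?_, ?_⟩
  · simpa [dotProduct, Fin.sum_univ_two] using hc
  · have hrow : !![star (u 0), star (u 1); -u 1, u 0] 0 = star u := by
      ext i; fin_cases i <;> rfl
    rw [mul_mul_conjTranspose_apply_self, hrow, star_star, star_smul, mulVec_smul,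
      smul_dotProduct, dotProduct_smul, hQ, smul_zero, smul_zero]

end Matrix

/-- Theorem 2 of the paper: every 2×2 complex matrix `M` can be "equidiagonalized" by a
unitary conjugation: there is a unitary `U` with the two diagonal entries of `U M Uᴴ`
equal (hence both equal to `trace M / 2`). -/
theorem exists_unitary_equidiagonalize_two (M : Matrix (Fin 2) (Fin 2) ℂ) :
    ∃ U ∈ Matrix.unitaryGroup (Fin 2) ℂ,
      (U * M * Uᴴ) 0 0 = (U * M * Uᴴ) 1 1 := by
  set N := M - (M.trace / 2) • 1
  have hN : N.trace = 0 := by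
    rw [Matrix.trace_sub, Matrix.trace_smul, Matrix.trace_one, Fintype.card_fin, smul_eq_mul]
    ring
  obtain ⟨U, hU, h00⟩ :=
    Matrix.exists_mem_unitaryGroup_mul_mul_conjTranspose_apply_zero_zero_eq_zero hN
  have h11 : (U * N * Uᴴ) 1 1 = 0 := by
    have := Matrix.trace_mul_mul_conjTranspose_of_mem_unitaryGroup hU N
    rwa [hN, Matrix.trace_fin_two, h00, zero_add] at this
  refine ⟨U, hU, ?_⟩
  rw [Matrix.mul_sub_smul_one_mul_conjTranspose_of_mem_unitaryGroup hU] at h00 h11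
  simp only [Matrix.sub_apply, Matrix.smul_apply, Matrix.one_apply_eq, smul_eq_mul, mul_one]
    at h00 h11
  linear_combination h00 - h11
end

section
/- Let M be an n×n complex matrix and let i, j be distinct indices in Fin n. Then there exists an n×n unitary matrix U such that (1) U agrees with the identity matrix in every entry (p, q) with p ∉ {i, j} or q ∉ {i, j}; (2) the conjugated matrix M' = U * M * Uᴴ satisfies M' i i = M' j j; and (3) M' p p = M p p for every p ∉ {i, j}. In particular M' i i + M' j j = M i i + M j j. -/
/-!
Conjugating by a unitary that is the identity off the coordinates `i, j` only mixes rows and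
columns `i, j`, so it fixes every other diagonal entry and the problem reduces to the `2 × 2`
block `!![a, b; c, d]`. Conjugating it by the normalization of `!![1, t; -conj t, 1]` makes the
difference of the diagonal entries a positive multiple of `(1 - |t|²)(a - d) + 2(t c + conj t b)`.
Choosing `t = r ε` with `|ε| = 1` such that `ε c + conj ε b` is a real multiple `λ (a - d)`,
this vanishes as soon as `r² = 2 λ r + 1`.
-/

open scoped Matrix ComplexConjugate

namespace Complex

theorem exists_norm_eq_one_mul_im_eq_zero (z : ℂ) : ∃ ε : ℂ, ‖ε‖ = 1 ∧ (ε * z).im = 0 := by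
  obtain ⟨r, u, hu, rfl⟩ : ∃ (r : ℝ) (u : ℂ), ‖u‖ = 1 ∧ z = r * u :=
    ⟨‖z‖, _, norm_exp_ofReal_mul_I _, (norm_mul_exp_arg_mul_I z).symm⟩
  refine ⟨conj u, by rwa [norm_conj], ?_⟩
  rw [mul_left_comm, conj_mul', hu]
  simp

theorem exists_one_sub_normSq_mul_add_eq_zero (δ b c : ℂ) :
    ∃ t : ℂ, (1 - normSq t) * δ + 2 * (t * c + conj t * b) = 0 := by
  rcases eq_or_ne δ 0 with rfl | hδ
  · exact ⟨0, by simp⟩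
  obtain ⟨ε, hε, him⟩ := exists_norm_eq_one_mul_im_eq_zero (c * conj δ - conj b * δ)
  set w := ε * c + conj ε * b
  have hw_real : w * conj δ = ((w * conj δ).re : ℂ) := by
    have hw : w * conj δ =
        ε * (c * conj δ - conj b * δ) + (ε * conj b * δ + conj (ε * conj b * δ)) := by
      simp only [w, map_mul, conj_conj]; ring
    refine ext rfl ?_
    rw [ofReal_im, hw, add_im, him, add_im, conj_im, zero_add, add_neg_cancel]
  obtain ⟨l, hl⟩ : ∃ l : ℝ, w = l * δ := by
    refine ⟨(w * conj δ).re / normSq δ, ?_⟩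
    have hn : conj δ ≠ 0 := (map_ne_zero _).mpr hδ
    push_cast
    rw [← hw_real, ← mul_conj δ]
    field_simp
  obtain ⟨r, hr⟩ : ∃ r : ℝ, r ^ 2 = 2 * l * r + 1 :=
    ⟨l + √(l ^ 2 + 1), by nlinarith [Real.sq_sqrt (by positivity : 0 ≤ l ^ 2 + 1)]⟩
  refine ⟨r * ε, ?_⟩
  have hnorm : normSq (r * ε) = r ^ 2 := by
    rw [normSq_mul, normSq_ofReal, normSq_eq_norm_sq, hε]; ring
  have hrC : (r : ℂ) ^ 2 = 2 * l * r + 1 := by exact_mod_cast hr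
  rw [hnorm, map_mul, conj_ofReal]
  push_cast
  linear_combination 2 * (r : ℂ) * hl - δ * hrC

end Complex

namespace Matrix

theorem reindex_mul_mul_conjTranspose {ι κ R : Type*} [Fintype ι] [Fintype κ] [Semiring R]
    [StarRing R] (e : κ ≃ ι) (W A : Matrix κ κ R) :
    reindex e e W * reindex e e A * (reindex e e W)ᴴ = reindex e e (W * A * Wᴴ) := by
  simp only [reindex_apply, conjTranspose_submatrix, submatrix_mul_equiv]

theorem reindex_mem_unitaryGroup {ι κ R : Type*} [Fintype ι] [DecidableEq ι] [Fintype κ]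
    [DecidableEq κ] [CommRing R] [StarRing R] {W : Matrix κ κ R} (e : κ ≃ ι)
    (hW : W ∈ unitaryGroup κ R) : reindex e e W ∈ unitaryGroup ι R := by
  rw [mem_unitaryGroup_iff, star_eq_conjTranspose, conjTranspose_reindex, reindex_apply,
    reindex_apply, submatrix_mul_equiv, ← star_eq_conjTranspose, mem_unitaryGroup_iff.mp hW,
    submatrix_one_equiv]

theorem fromBlocks_mem_unitaryGroup {ι κ R : Type*} [Fintype ι] [DecidableEq ι] [Fintype κ]
    [DecidableEq κ] [CommRing R] [StarRing R] {A : Matrix κ κ R} {D : Matrix ι ι R}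
    (hA : A ∈ unitaryGroup κ R) (hD : D ∈ unitaryGroup ι R) :
    fromBlocks A 0 0 D ∈ unitaryGroup (κ ⊕ ι) R := by
  rw [mem_unitaryGroup_iff, star_eq_conjTranspose, fromBlocks_conjTranspose, fromBlocks_multiply,
    ← star_eq_conjTranspose, ← star_eq_conjTranspose, mem_unitaryGroup_iff.mp hA,
    mem_unitaryGroup_iff.mp hD]
  simp

open Complex in
theorem exists_unitary_fin_two_conj_apply_zero_zero_eq_one_one (A : Matrix (Fin 2) (Fin 2) ℂ) :
    ∃ W ∈ unitaryGroup (Fin 2) ℂ, (W * A * Wᴴ) 0 0 = (W * A * Wᴴ) 1 1 := by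
  obtain ⟨t, ht⟩ := exists_one_sub_normSq_mul_add_eq_zero (A 0 0 - A 1 1) (A 0 1) (A 1 0)
  have hpos : 0 < 1 + normSq t := by linarith [normSq_nonneg t]
  obtain ⟨c, hc⟩ : ∃ c : ℝ, c ^ 2 * (1 + normSq t) = 1 :=
    ⟨(√(1 + normSq t))⁻¹, by rw [inv_pow, Real.sq_sqrt hpos.le, inv_mul_cancel₀ hpos.ne']⟩
  have hcC : (c : ℂ) ^ 2 * (1 + t * conj t) = 1 := by rw [mul_conj]; exact_mod_cast hc
  refine ⟨(c : ℂ) • !![1, t; -conj t, 1], ?_, ?_⟩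
  · rw [mem_unitaryGroup_iff, star_eq_conjTranspose]
    ext a b
    fin_cases a <;> fin_cases b <;>
      simp [mul_apply, Fin.sum_univ_two, conjTranspose_apply]
    all_goals first | linear_combination hcC | ring
  · rw [← mul_conj] at ht
    simp [mul_apply, vecMul, dotProduct, Fin.sum_univ_two]
    linear_combination (c : ℂ) ^ 2 * ht

theorem exists_unitary_conj_apply_self_eq_of_card_eq_two {κ : Type*} [Fintype κ] [DecidableEq κ]
    (A : Matrix κ κ ℂ) (hκ : Nat.card κ = 2) :
    ∃ W ∈ unitaryGroup κ ℂ, ∀ x y, (W * A * Wᴴ) x x = (W * A * Wᴴ) y y := by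
  let e : κ ≃ Fin 2 := Finite.equivFinOfCardEq hκ
  obtain ⟨W, hW, h01⟩ := exists_unitary_fin_two_conj_apply_zero_zero_eq_one_one (reindex e e A)
  have hconst : ∀ k, (W * reindex e e A * Wᴴ) k k = (W * reindex e e A * Wᴴ) 0 0 := by
    intro k
    fin_cases k
    · rfl
    · exact h01.symm
  refine ⟨reindex e.symm e.symm W, reindex_mem_unitaryGroup _ hW, fun x y => ?_⟩
  have hA : A = reindex e.symm e.symm (reindex e e A) := by simp
  rw [hA, reindex_mul_mul_conjTranspose, reindex_apply, submatrix_apply, submatrix_apply,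
    Equiv.symm_symm, hconst (e x), hconst (e y)]

section extendByOne

variable {ι R : Type*} [DecidableEq ι] (p : ι → Prop) [DecidablePred p]

def extendByOne [Zero R] [One R] (W : Matrix {a // p a} {a // p a} R) : Matrix ι ι R :=
  reindex (Equiv.sumCompl p) (Equiv.sumCompl p) (fromBlocks W 0 0 1)

variable {p}

theorem extendByOne_apply_of_not_or [Zero R] [One R] (W : Matrix {a // p a} {a // p a} R)
    {a b : ι} (h : ¬p a ∨ ¬p b) : extendByOne p W a b = (1 : Matrix ι ι R) a b := by
  rcases em (p a) with ha | ha <;> rcases em (p b) with hb | hb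
  · simp [ha, hb] at h
  · simp [extendByOne, Equiv.sumCompl_symm_apply_of_pos ha, Equiv.sumCompl_symm_apply_of_neg hb,
      one_apply_ne (fun hab : a = b => hb (hab ▸ ha))]
  · simp [extendByOne, Equiv.sumCompl_symm_apply_of_neg ha, Equiv.sumCompl_symm_apply_of_pos hb,
      one_apply_ne (fun hab : a = b => ha (hab ▸ hb))]
  · simp [extendByOne, Equiv.sumCompl_symm_apply_of_neg ha, Equiv.sumCompl_symm_apply_of_neg hb,
      one_apply]

variable [Fintype ι]

theorem extendByOne_mem_unitaryGroup [CommRing R] [StarRing R]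
    {W : Matrix {a // p a} {a // p a} R} (hW : W ∈ unitaryGroup {a // p a} R) :
    extendByOne p W ∈ unitaryGroup ι R :=
  reindex_mem_unitaryGroup _ (fromBlocks_mem_unitaryGroup hW (one_mem _))

variable [Semiring R] [StarRing R]

theorem submatrix_sumCompl_extendByOne_conj (W : Matrix {a // p a} {a // p a} R)
    (M : Matrix ι ι R) :
    (extendByOne p W * M * (extendByOne p W)ᴴ).submatrix (Equiv.sumCompl p) (Equiv.sumCompl p) =
      fromBlocks (W * M.toBlock p p * Wᴴ) (W * M.toBlock p (¬p ·))
        (M.toBlock (¬p ·) p * Wᴴ) (M.toBlock (¬p ·) (¬p ·)) := by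
  have hM : M = reindex (Equiv.sumCompl p) (Equiv.sumCompl p) (fromBlocks (M.toBlock p p)
      (M.toBlock p (¬p ·)) (M.toBlock (¬p ·) p) (M.toBlock (¬p ·) (¬p ·))) := by
    ext a b
    rcases em (p a) with ha | ha <;> rcases em (p b) with hb | hb <;>
      simp [Equiv.sumCompl_symm_apply_of_pos, Equiv.sumCompl_symm_apply_of_neg, ha, hb]
  conv_lhs => rw [hM, extendByOne, reindex_mul_mul_conjTranspose, reindex_apply]
  simp [fromBlocks_conjTranspose, fromBlocks_multiply]

theorem extendByOne_conj_apply_val (W : Matrix {a // p a} {a // p a} R) (M : Matrix ι ι R)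
    (a b : {a // p a}) :
    (extendByOne p W * M * (extendByOne p W)ᴴ) a b = (W * M.toBlock p p * Wᴴ) a b :=
  congrFun₂ (submatrix_sumCompl_extendByOne_conj W M) (.inl a) (.inl b)

theorem extendByOne_conj_apply_of_not (W : Matrix {a // p a} {a // p a} R) (M : Matrix ι ι R)
    {a b : ι} (ha : ¬p a) (hb : ¬p b) :
    (extendByOne p W * M * (extendByOne p W)ᴴ) a b = M a b :=
  congrFun₂ (submatrix_sumCompl_extendByOne_conj W M)
    (.inr ⟨a, ha⟩) (.inr ⟨b, hb⟩)

end extendByOne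

end Matrix

/-- The elementary pairwise-equalization step: for any `n×n` complex matrix `M` and distinct
indices `i ≠ j` there is a two-level unitary `U`, acting only on coordinates `i` and `j`
(i.e. agreeing with the identity in every entry `(p,q)` with `p ∉ {i,j}` or `q ∉ {i,j}`),
such that `M' = U M Uᴴ` has `M' i i = M' j j` while the other diagonal entries are
unchanged. -/
theorem exists_twoLevel_unitary_equalize_pair (n : ℕ)
    (M : Matrix (Fin n) (Fin n) ℂ) (i j : Fin n) (hij : i ≠ j) :
    ∃ U ∈ Matrix.unitaryGroup (Fin n) ℂ,
      (∀ p q : Fin n, p ∉ ({i, j} : Set (Fin n)) ∨ q ∉ ({i, j} : Set (Fin n)) →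
        U p q = (1 : Matrix (Fin n) (Fin n) ℂ) p q) ∧
      (U * M * Uᴴ) i i = (U * M * Uᴴ) j j ∧
      (∀ p : Fin n, p ∉ ({i, j} : Set (Fin n)) → (U * M * Uᴴ) p p = M p p) := by
  let p : Fin n → Prop := fun a => a = i ∨ a = j
  obtain ⟨W, hW, hdiag⟩ := Matrix.exists_unitary_conj_apply_self_eq_of_card_eq_two
    (M.toBlock p p) ((Nat.card_coe_set_eq {i, j}).trans (Set.ncard_pair hij))
  refine ⟨Matrix.extendByOne p W, Matrix.extendByOne_mem_unitaryGroup hW,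
    fun _ _ h => Matrix.extendByOne_apply_of_not_or W h, ?_,
    fun _ ha => Matrix.extendByOne_conj_apply_of_not W M ha ha⟩
  rw [Matrix.extendByOne_conj_apply_val W M ⟨i, .inl rfl⟩ ⟨i, .inl rfl⟩,
    Matrix.extendByOne_conj_apply_val W M ⟨j, .inr rfl⟩ ⟨j, .inr rfl⟩]
  exact hdiag _ _
end

section
/- Let n ≥ 1 and let M be an n×n complex matrix with trace M = 0. Let k be a natural number with n ≤ 2^k, and let M₀ be the (2^k)×(2^k) complex matrix whose top-left n×n block is M and whose remaining entries are all zero. Then there exists a (2^k)×(2^k) unitary matrix U such that every diagonal entry of U * M₀ * Uᴴ is zero. -/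
/-! Conjugating a matrix `B` indexed by `m × o` by `1 ⊗ W` conjugates its partial trace
`Tr_m B`, the `o × o` matrix whose diagonal entries are the traces of the diagonal blocks of `B`,
by `W`. So if traceless matrices over `o` and over `m` can be unitarily conjugated to zero
diagonal, then so can a traceless `B`: first choose `W` so that every diagonal block of `B` becomes
traceless, then conjugate each block separately by a block-diagonal unitary. This reduces the
size `2 ^ k` to the size `2`. A traceless `!![p, q; r, -p]` gets zero diagonal under the unitary
with first row proportional to `(1, t̄)` as soon as `p (1 - |t|²) + q t + r t̄ = 0`; such a `t` is
`s e` with `|e| = 1` chosen to make `(q e + r ē) / p` real and `s` a root of the resulting real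
quadratic `s² = c s + 1`. Zero padding does not change the trace. -/

open scoped Matrix Kronecker ComplexConjugate

theorem Complex.exists_norm_eq_one_mul_im_eq_zero_s10 (w : ℂ) :
    ∃ e : ℂ, ‖e‖ = 1 ∧ (w * e).im = 0 := by
  refine ⟨exp (↑(-arg w) * I), norm_exp_ofReal_mul_I _, ?_⟩
  nth_rewrite 1 [← norm_mul_exp_arg_mul_I w]
  rw [mul_assoc, ← exp_add]
  simp

theorem Complex.exists_mul_one_sub_conj_mul_self_add_eq_zero (p q r : ℂ) :
    ∃ t : ℂ, p * (1 - conj t * t) + q * t + r * conj t = 0 := by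
  rcases eq_or_ne p 0 with rfl | hp
  · exact ⟨0, by simp⟩
  set a := q / p
  set b := r / p
  obtain ⟨e, he, him⟩ := exists_norm_eq_one_mul_im_eq_zero_s10 (a - conj b)
  -- `Im (a e + b ē) = Im ((a - b̄) e)`
  have hc : a * e + b * conj e = ((a * e + b * conj e).re : ℂ) := by
    refine Complex.ext rfl ?_
    simp only [mul_im, sub_re, sub_im, conj_re, conj_im, add_im, ofReal_im] at him ⊢
    linarith
  set c := (a * e + b * conj e).re
  obtain ⟨s, hs⟩ : ∃ s : ℝ, s ^ 2 = c * s + 1 :=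
    ⟨(c + √(c ^ 2 + 4)) / 2, by nlinarith [Real.sq_sqrt (by positivity : (0:ℝ) ≤ c ^ 2 + 4)]⟩
  have hee : conj e * e = 1 := by rw [conj_mul', he]; simp
  refine ⟨s * e, ?_⟩
  have hs' : (s : ℂ) ^ 2 = c * s + 1 := by exact_mod_cast hs
  rw [map_mul, conj_ofReal, ← mul_div_cancel₀ q hp, ← mul_div_cancel₀ r hp]
  linear_combination (p * s) * hc - (p * s ^ 2) * hee - p * hs'

namespace Matrix

variable {R : Type*} {m n o : Type*} [Fintype m] [Fintype n] [Fintype o]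

theorem trace_submatrix_equiv [AddCommMonoid R] (A : Matrix n n R) (e : m ≃ n) :
    (A.submatrix e e).trace = A.trace :=
  Fintype.sum_equiv e _ _ fun _ => rfl

theorem submatrix_equiv_mem_unitaryGroup [DecidableEq m] [DecidableEq n] [CommRing R] [StarRing R]
    {U : Matrix n n R} (hU : U ∈ unitaryGroup n R) (e : m ≃ n) :
    U.submatrix e e ∈ unitaryGroup m R := by
  rw [mem_unitaryGroup_iff, star_eq_conjTranspose, conjTranspose_submatrix, submatrix_mul_equiv,
    ← star_eq_conjTranspose, mem_unitaryGroup_iff.mp hU, submatrix_one_equiv]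

theorem trace_mul_mul_conjTranspose_of_mem_unitaryGroup_s10 [DecidableEq n] [CommRing R] [StarRing R]
    {U : Matrix n n R} (hU : U ∈ unitaryGroup n R) (A : Matrix n n R) :
    (U * A * Uᴴ).trace = A.trace := by
  rw [trace_mul_cycle, ← star_eq_conjTranspose, mem_unitaryGroup_iff'.mp hU, one_mul]

theorem blockDiagonal_mem_unitaryGroup [DecidableEq m] [DecidableEq o] [CommRing R] [StarRing R]
    {U : o → Matrix m m R} (hU : ∀ a, U a ∈ unitaryGroup m R) :
    blockDiagonal U ∈ unitaryGroup (m × o) R := by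
  rw [mem_unitaryGroup_iff, star_eq_conjTranspose, blockDiagonal_conjTranspose,
    ← blockDiagonal_mul]
  simp_rw [← star_eq_conjTranspose, fun a => mem_unitaryGroup_iff.mp (hU a)]
  exact blockDiagonal_one

theorem blockDiagonal_mul_mul_apply [DecidableEq o] [Semiring R] (U V : o → Matrix m m R)
    (B : Matrix (m × o) (m × o) R) (i j : m) (a b : o) :
    (blockDiagonal U * B * blockDiagonal V) (i, a) (j, b) =
      (U a * B.submatrix (·, a) (·, b) * V b) i j := by
  simp [mul_apply, blockDiagonal_apply, Fintype.sum_prod_type, ite_mul, mul_ite, Finset.sum_mul]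

def partialTrace [AddCommMonoid R] (B : Matrix (m × o) (m × o) R) : Matrix o o R :=
  of fun a b => ∑ i, B (i, a) (i, b)

theorem trace_partialTrace [AddCommMonoid R] (B : Matrix (m × o) (m × o) R) :
    (partialTrace B).trace = B.trace := by
  simp only [trace, diag, partialTrace, of_apply, Fintype.sum_prod_type]
  exact Finset.sum_comm

theorem partialTrace_one_kronecker_mul_mul_conjTranspose [DecidableEq m] [CommSemiring R]
    [StarRing R] (W : Matrix o o R) (B : Matrix (m × o) (m × o) R) :
    partialTrace ((1 ⊗ₖ W) * B * (1 ⊗ₖ W)ᴴ) = W * partialTrace B * Wᴴ := by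
  ext a b
  simp only [partialTrace, of_apply, mul_apply, kroneckerMap_apply, one_apply, conjTranspose_apply,
    Fintype.sum_prod_type, ite_mul, one_mul, zero_mul, apply_ite star, star_zero, mul_ite, mul_zero,
    Finset.sum_ite_irrel, Finset.sum_const_zero, Finset.sum_ite_eq, Finset.mem_univ, if_true]
  rw [Finset.sum_comm]
  simp only [Finset.mul_sum, Finset.sum_mul]
  exact Finset.sum_congr rfl fun _ _ => Finset.sum_comm

variable [DecidableEq m] [DecidableEq n] [DecidableEq o]

def IsUnitarilyZeroDiagonalizable (A : Matrix n n ℂ) : Prop :=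
  ∃ U ∈ unitaryGroup n ℂ, ∀ i, (U * A * Uᴴ) i i = 0

def TracelessZeroDiagonalizable (n : Type*) [Fintype n] [DecidableEq n] : Prop :=
  ∀ A : Matrix n n ℂ, A.trace = 0 → A.IsUnitarilyZeroDiagonalizable

theorem IsUnitarilyZeroDiagonalizable.of_conj {A W : Matrix n n ℂ} (hW : W ∈ unitaryGroup n ℂ)
    (h : (W * A * Wᴴ).IsUnitarilyZeroDiagonalizable) : A.IsUnitarilyZeroDiagonalizable := by
  obtain ⟨U, hU, hdiag⟩ := h
  refine ⟨U * W, mul_mem hU hW, fun i => ?_⟩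
  simpa only [conjTranspose_mul, Matrix.mul_assoc] using hdiag i

theorem IsUnitarilyZeroDiagonalizable.of_submatrix_equiv {A : Matrix n n ℂ} (e : m ≃ n)
    (h : (A.submatrix e e).IsUnitarilyZeroDiagonalizable) : A.IsUnitarilyZeroDiagonalizable := by
  obtain ⟨U, hU, hdiag⟩ := h
  refine ⟨U.submatrix e.symm e.symm, submatrix_equiv_mem_unitaryGroup hU e.symm, fun i => ?_⟩
  have hA : A = (A.submatrix e e).submatrix e.symm e.symm := by simp
  rw [conjTranspose_submatrix, hA, submatrix_mul_equiv, submatrix_mul_equiv]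
  exact hdiag (e.symm i)

theorem TracelessZeroDiagonalizable.of_equiv (h : TracelessZeroDiagonalizable m) (e : m ≃ n) :
    TracelessZeroDiagonalizable n := fun A hA =>
  .of_submatrix_equiv e (h _ (by rwa [trace_submatrix_equiv]))

theorem TracelessZeroDiagonalizable.prod (hm : TracelessZeroDiagonalizable m)
    (ho : TracelessZeroDiagonalizable o) : TracelessZeroDiagonalizable (m × o) := by
  intro B hB
  obtain ⟨W, hW, hWdiag⟩ := ho (partialTrace B) (by rwa [trace_partialTrace])
  have hV : 1 ⊗ₖ W ∈ unitaryGroup (m × o) ℂ := kronecker_mem_unitary (one_mem _) hW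
  set B' := (1 ⊗ₖ W) * B * (1 ⊗ₖ W)ᴴ
  have hblock : ∀ a, (B'.submatrix (·, a) (·, a)).trace = 0 := fun a => by
    rw [← hWdiag a, ← partialTrace_one_kronecker_mul_mul_conjTranspose]
    rfl
  choose U hU hUdiag using fun a => hm _ (hblock a)
  refine .of_conj hV ⟨blockDiagonal U, blockDiagonal_mem_unitaryGroup hU, ?_⟩
  rintro ⟨i, a⟩
  rw [blockDiagonal_conjTranspose, blockDiagonal_mul_mul_apply]
  exact hUdiag a i

theorem tracelessZeroDiagonalizable_of_unique [Unique n] : TracelessZeroDiagonalizable n := by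
  intro A hA
  refine ⟨1, one_mem _, fun i => ?_⟩
  rw [Subsingleton.elim i default]
  simpa [trace] using hA

theorem tracelessZeroDiagonalizable_fin_two : TracelessZeroDiagonalizable (Fin 2) := by
  intro A hA
  obtain ⟨t, ht⟩ := Complex.exists_mul_one_sub_conj_mul_self_add_eq_zero (A 0 0) (A 0 1) (A 1 0)
  obtain ⟨c, hc⟩ : ∃ c : ℝ, c ^ 2 * (1 + ‖t‖ ^ 2) = 1 :=
    ⟨(√(1 + ‖t‖ ^ 2))⁻¹, by
      rw [inv_pow, Real.sq_sqrt (by positivity), inv_mul_cancel₀ (by positivity)]⟩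
  have hc' : (c : ℂ) * c * (1 + conj t * t) = 1 := by
    rw [Complex.conj_mul', ← sq]
    exact_mod_cast hc
  set U : Matrix (Fin 2) (Fin 2) ℂ := (c : ℂ) • !![1, conj t; -t, 1]
  have hU : U ∈ unitaryGroup (Fin 2) ℂ := by
    rw [mem_unitaryGroup_iff]
    ext i j
    fin_cases i <;> fin_cases j <;> 
      simp only [U, smul_of, smul_cons, smul_eq_mul, mul_one, smul_empty, mul_neg, neg_mul, neg_neg,
        Fin.zero_eta, Fin.isValue, Fin.mk_one, mul_apply, of_apply, cons_val', cons_val_fin_one,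
        cons_val_zero, cons_val_one, star_apply, RCLike.star_def, Fin.sum_univ_two,
        Complex.conj_ofReal, Complex.conj_conj, map_mul, map_neg, one_apply_eq, ne_eq, zero_ne_one,
        one_ne_zero, not_false_eq_true, one_apply_ne] <;>
      first | linear_combination hc' | ring
  have h00 : (U * A * Uᴴ) 0 0 = 0 := by
    rw [trace_fin_two] at hA
    simp only [U, smul_of, smul_cons, smul_eq_mul, mul_one, smul_empty, mul_neg, cons_mul,
      Nat.succ_eq_add_one, Nat.reduceAdd, empty_mul, Equiv.symm_apply_apply, Fin.isValue, mul_apply,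
      of_apply, cons_val', vecMul, dotProduct, Fin.sum_univ_two, cons_val_zero, cons_val_one,
      cons_val_fin_one, neg_mul, conjTranspose_apply, RCLike.star_def, Complex.conj_ofReal, map_mul,
      Complex.conj_conj]
    linear_combination (c * c : ℂ) * ht + (c * c * conj t * t) * hA
  refine ⟨U, hU, Fin.forall_fin_two.mpr ⟨h00, ?_⟩⟩
  have htr := trace_mul_mul_conjTranspose_of_mem_unitaryGroup_s10 hU A
  rwa [hA, trace_fin_two, h00, zero_add] at htr

theorem tracelessZeroDiagonalizable_fin_two_pow (k : ℕ) :
    TracelessZeroDiagonalizable (Fin (2 ^ k)) := by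
  induction k with
  | zero => exact tracelessZeroDiagonalizable_of_unique (n := Fin 1)
  | succ k ih =>
    exact (ih.prod tracelessZeroDiagonalizable_fin_two).of_equiv
      (finProdFinEquiv.trans (finCongr (pow_succ 2 k).symm))

theorem trace_eq_of_forall_apply_eq_dite [AddCommMonoid R] {n N : ℕ} (hn : n ≤ N)
    (M : Matrix (Fin n) (Fin n) R) (M₀ : Matrix (Fin N) (Fin N) R)
    (hM₀ : ∀ i j : Fin N,
      M₀ i j = if h : (i : ℕ) < n ∧ (j : ℕ) < n then M ⟨i, h.1⟩ ⟨j, h.2⟩ else 0) :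
    M₀.trace = M.trace := by
  obtain ⟨d, rfl⟩ := Nat.exists_eq_add_of_le hn
  simp [trace, Fin.sum_univ_add, hM₀]

end Matrix

theorem exists_unitary_zerodiagonalize_padded_general (n : ℕ)
    (M : Matrix (Fin n) (Fin n) ℂ) (hM : M.trace = 0)
    (k : ℕ) (hk : n ≤ 2 ^ k)
    (M₀ : Matrix (Fin (2 ^ k)) (Fin (2 ^ k)) ℂ)
    (hM₀ : ∀ i j : Fin (2 ^ k),
      M₀ i j = if h : (i : ℕ) < n ∧ (j : ℕ) < n then M ⟨i, h.1⟩ ⟨j, h.2⟩ else 0) :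
    ∃ U ∈ Matrix.unitaryGroup (Fin (2 ^ k)) ℂ,
      ∀ i : Fin (2 ^ k), (U * M₀ * Uᴴ) i i = 0 :=
  Matrix.tracelessZeroDiagonalizable_fin_two_pow k M₀ <| by
    rw [Matrix.trace_eq_of_forall_apply_eq_dite hk M M₀ hM₀, hM]

/-- General-case zerodiagonalization: if `M` is a traceless `n×n` complex matrix (`n ≥ 1`)
and `M₀` is the `2^k × 2^k` matrix (`n ≤ 2^k`) whose top-left `n×n` block is `M` and whose
remaining entries vanish, then some unitary conjugate of `M₀` has all diagonal entries
zero. -/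
theorem exists_unitary_zerodiagonalize_padded (n : ℕ) (hn : 1 ≤ n)
    (M : Matrix (Fin n) (Fin n) ℂ) (hM : M.trace = 0)
    (k : ℕ) (hk : n ≤ 2 ^ k)
    (M₀ : Matrix (Fin (2 ^ k)) (Fin (2 ^ k)) ℂ)
    (hM₀ : ∀ i j : Fin (2 ^ k),
      M₀ i j = if h : (i : ℕ) < n ∧ (j : ℕ) < n then M ⟨i, h.1⟩ ⟨j, h.2⟩ else 0) :
    ∃ U ∈ Matrix.unitaryGroup (Fin (2 ^ k)) ℂ,
      ∀ i : Fin (2 ^ k), (U * M₀ * Uᴴ) i i = 0 :=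
  exists_unitary_zerodiagonalize_padded_general n M hM k hk M₀ hM₀
end

section
/- Let F and G be n×m complex matrices (n ≥ 1) with trace (F * Gᴴ) = 0. Then there exist a natural number k with n ≤ 2^k, and a (2^k)×(2^k) unitary matrix U, such that, writing F₀ and G₀ for the (2^k)×m matrices obtained from F and G by appending zero rows, the matrix (U * F₀) * (U * G₀)ᴴ has all diagonal entries equal to zero; equivalently, for every index i in Fin (2^k), Σ_j (U * F₀) i j · conj ((U * G₀) i j) = 0. -/
/-!
Every trace-zero complex matrix `A` is unitarily similar to one with zero diagonal; this is
applied to `F₀ G₀ᴴ`, whose trace is `trace (F Gᴴ)`, since `(U F₀) (U G₀)ᴴ = U (F₀ G₀ᴴ) Uᴴ`.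
By induction on the size it suffices to find a unit vector `v` with `v* A v = 0`: complete `v`
to a unitary and recurse on the complementary block, whose trace is again zero.

For orthonormal `v, w` with `a = v* A v`, `b = w* A w`, the unit vectors `x v + y μ w`
(`x² + y² = 1`, with a phase `μ` making the cross term purely imaginary) realise the values
`x² a + y² b + i x y r`. If `Im a > 0 > Im b`, the intermediate value theorem gives a real
value between `Re a` and `Re b`. Applied to `i A` and two diagonal entries, this yields unit
vectors with `Re (v* A v) = 0`, hence by the same induction a unitary making every diagonal entry
of `A` purely imaginary; applied once more to two of those entries, it yields `v* A v = 0`.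
-/

open Matrix Complex ComplexConjugate Real

theorem Complex.exists_norm_eq_one_re_mul_eq_zero (s : ℂ) :
    ∃ μ : ℂ, ‖μ‖ = 1 ∧ (μ * s).re = 0 := by
  refine ⟨I * exp (-(arg s * I)), by simp [norm_exp], ?_⟩
  have : I * exp (-(arg s * I)) * s = ‖s‖ * I := by
    calc I * exp (-(arg s * I)) * s
        = I * exp (-(arg s * I)) * (‖s‖ * exp (arg s * I)) := by rw [norm_mul_exp_arg_mul_I]
      _ = ‖s‖ * I * exp (-(arg s * I) + arg s * I) := by rw [exp_add]; ring
      _ = ‖s‖ * I := by simp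
  rw [this]
  simp

theorem Fintype.exists_eq_zero_or_exists_pos_neg_of_sum_eq_zero {ι M : Type*} [Fintype ι]
    [Nonempty ι] [AddCommGroup M] [LinearOrder M] [IsOrderedAddMonoid M] {d : ι → M}
    (h : ∑ i, d i = 0) :
    (∃ i, d i = 0) ∨ ∃ i j, 0 < d i ∧ d j < 0 := by
  by_cases hz : ∃ i, d i = 0
  · exact .inl hz
  push Not at hz
  have hne : ∃ i ∈ Finset.univ, d i ≠ 0 := ⟨Classical.arbitrary ι, Finset.mem_univ _, hz _⟩
  obtain ⟨i, -, hi⟩ := Finset.exists_pos_of_sum_zero_of_exists_nonzero d h hne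
  obtain ⟨j, -, hj⟩ := Finset.exists_pos_of_sum_zero_of_exists_nonzero (s := Finset.univ) (-d)
    (by simp [h]) (by simpa using hne)
  exact .inr ⟨i, j, hi, neg_pos.mp hj⟩

namespace Matrix

section

variable {ι : Type*} [Fintype ι]

theorem mul_mul_conjTranspose_apply (U A : Matrix ι ι ℂ) (i j : ι) :
    (U * A * Uᴴ) i j = star (star (U i)) ⬝ᵥ A *ᵥ star (U j) := by
  rw [mul_mul_apply, star_star]; rfl

theorem star_smul_add_smul_dotProduct_mulVec (A : Matrix ι ι ℂ) (v w : ι → ℂ) (α β : ℂ) :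
    star (α • v + β • w) ⬝ᵥ A *ᵥ (α • v + β • w) =
      conj α * α * (star v ⬝ᵥ A *ᵥ v) + conj β * β * (star w ⬝ᵥ A *ᵥ w) +
        (conj α * β * (star v ⬝ᵥ A *ᵥ w) + conj β * α * (star w ⬝ᵥ A *ᵥ v)) := by
  simp only [star_add, star_smul, mulVec_add, mulVec_smul, add_dotProduct, dotProduct_add,
    smul_dotProduct, dotProduct_smul, smul_eq_mul, RCLike.star_def]
  ring

theorem exists_unit_quadForm_eq_of_sq_add_sq (A : Matrix ι ι ℂ) {v w : ι → ℂ}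
    (hv : star v ⬝ᵥ v = 1) (hw : star w ⬝ᵥ w = 1) (hvw : star v ⬝ᵥ w = 0) :
    ∃ r : ℝ, ∀ x y : ℝ, x ^ 2 + y ^ 2 = 1 → ∃ u : ι → ℂ, star u ⬝ᵥ u = 1 ∧
      star u ⬝ᵥ A *ᵥ u = (x ^ 2 : ℝ) * (star v ⬝ᵥ A *ᵥ v) + (y ^ 2 : ℝ) * (star w ⬝ᵥ A *ᵥ w)
        + (x * y * r : ℝ) * I := by
  classical
  have hwv : star w ⬝ᵥ v = 0 := by rw [star_dotProduct, hvw, star_zero]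
  obtain ⟨μ, hμ, hre⟩ :=
    exists_norm_eq_one_re_mul_eq_zero (star v ⬝ᵥ A *ᵥ w + conj (star w ⬝ᵥ A *ᵥ v))
  set z := μ * (star v ⬝ᵥ A *ᵥ w) + conj μ * (star w ⬝ᵥ A *ᵥ v)
  have hz : z = z.im * I := by
    refine Complex.ext ?_ (by simp)
    simpa [z, mul_add, ← conj_re (conj μ * _)] using hre
  have hμμ : conj μ * μ = 1 := by rw [conj_mul', hμ]; simp
  refine ⟨z.im, fun x y hxy => ?_⟩
  have hxy' : (x : ℂ) ^ 2 + (y : ℂ) ^ 2 = 1 := by exact_mod_cast hxy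
  refine ⟨(x : ℂ) • v + ((y : ℂ) * μ) • w, ?_, ?_⟩
  · have := star_smul_add_smul_dotProduct_mulVec 1 v w x (y * μ)
    simp only [one_mulVec, hv, hw, hvw, hwv] at this
    rw [this]
    simp only [map_mul, conj_ofReal]
    linear_combination (y : ℂ) ^ 2 * hμμ + hxy'
  · rw [star_smul_add_smul_dotProduct_mulVec]
    simp only [map_mul, conj_ofReal]
    push_cast
    linear_combination (x * y : ℂ) * hz + (y : ℂ) ^ 2 * (star w ⬝ᵥ A *ᵥ w) * hμμ

theorem exists_unit_quadForm_im_eq_zero_re_mem_segment (A : Matrix ι ι ℂ) {v w : ι → ℂ}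
    (hv : star v ⬝ᵥ v = 1) (hw : star w ⬝ᵥ w = 1) (hvw : star v ⬝ᵥ w = 0)
    (hpos : 0 < (star v ⬝ᵥ A *ᵥ v).im) (hneg : (star w ⬝ᵥ A *ᵥ w).im < 0) :
    ∃ u : ι → ℂ, star u ⬝ᵥ u = 1 ∧ (star u ⬝ᵥ A *ᵥ u).im = 0 ∧
      (star u ⬝ᵥ A *ᵥ u).re ∈ segment ℝ (star v ⬝ᵥ A *ᵥ v).re (star w ⬝ᵥ A *ᵥ w).re := by
  obtain ⟨r, hr⟩ := exists_unit_quadForm_eq_of_sq_add_sq A hv hw hvw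
  set a := star v ⬝ᵥ A *ᵥ v
  set b := star w ⬝ᵥ A *ᵥ w
  let g : ℝ → ℝ := fun θ =>
    Real.cos θ ^ 2 * a.im + Real.sin θ ^ 2 * b.im + Real.cos θ * Real.sin θ * r
  obtain ⟨θ, -, hθ⟩ : ∃ θ ∈ Set.Icc 0 (π / 2), g θ = 0 :=
    intermediate_value_Icc' (by positivity) (by fun_prop : Continuous g).continuousOn
      ⟨by simpa [g] using hneg.le, by simpa [g] using hpos.le⟩
  obtain ⟨u, hu, hAu⟩ := hr (Real.cos θ) (Real.sin θ) (Real.cos_sq_add_sin_sq θ)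
  refine ⟨u, hu, ?_, Real.cos θ ^ 2, Real.sin θ ^ 2, by positivity, by positivity,
    Real.cos_sq_add_sin_sq θ, ?_⟩
  all_goals simp only [hAu, add_re, add_im, mul_re, mul_im, I_re, I_im, ofReal_re, ofReal_im]
  · linear_combination hθ
  · ring

theorem exists_unit_quadForm_im_eq_zero_re_mem [DecidableEq ι] [Nonempty ι] {K : Set ℝ}
    (hK : Convex ℝ K) (A : Matrix ι ι ℂ) {U : Matrix ι ι ℂ} (hU : U ∈ unitaryGroup ι ℂ)
    (hdiag : ∀ i, ((U * A * Uᴴ) i i).re ∈ K) (htr : A.trace.im = 0) :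
    ∃ u : ι → ℂ, star u ⬝ᵥ u = 1 ∧ (star u ⬝ᵥ A *ᵥ u).im = 0 ∧ (star u ⬝ᵥ A *ᵥ u).re ∈ K := by
  have hrow (B : Matrix ι ι ℂ) (i j : ι) :
      star (star (U i)) ⬝ᵥ B *ᵥ star (U j) = (U * B * Uᴴ) i j :=
    (mul_mul_conjTranspose_apply U B i j).symm
  have hunit (i j : ι) : star (star (U i)) ⬝ᵥ star (U j) = (1 : Matrix ι ι ℂ) i j := by
    have hUU : U * Uᴴ = 1 := mem_unitaryGroup_iff.mp hU
    simpa only [one_mulVec, Matrix.mul_one, hUU] using hrow 1 i j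
  have hsum : ∑ i, ((U * A * Uᴴ) i i).im = 0 := by
    have htrU : (U * A * Uᴴ).trace = A.trace := by
      rw [trace_mul_cycle, show Uᴴ * U = 1 from mem_unitaryGroup_iff'.mp hU, Matrix.one_mul]
    simpa [trace, im_sum] using (congrArg im htrU).trans htr
  rcases Fintype.exists_eq_zero_or_exists_pos_neg_of_sum_eq_zero hsum with ⟨i, hi⟩ | ⟨i, j, hi, hj⟩
  · refine ⟨star (U i), by rw [hunit, one_apply_eq], ?_, ?_⟩ <;> rw [hrow]
    exacts [hi, hdiag i]
  · have hij : i ≠ j := by rintro rfl; linarith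
    obtain ⟨u, hu, him, hre⟩ := exists_unit_quadForm_im_eq_zero_re_mem_segment A
      (v := star (U i)) (w := star (U j)) (by rw [hunit, one_apply_eq])
      (by rw [hunit, one_apply_eq]) (by rw [hunit, one_apply_ne hij])
      (by rwa [hrow]) (by rwa [hrow])
    rw [hrow, hrow] at hre
    exact ⟨u, hu, him, hK.segment_subset (hdiag i) (hdiag j) hre⟩

theorem exists_unit_re_quadForm_eq_zero [Nonempty ι] (A : Matrix ι ι ℂ) (hA : A.trace.re = 0) :
    ∃ v : ι → ℂ, star v ⬝ᵥ v = 1 ∧ (star v ⬝ᵥ A *ᵥ v).re = 0 := by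
  classical
  obtain ⟨u, hu, him, -⟩ := exists_unit_quadForm_im_eq_zero_re_mem convex_univ (I • A)
    (one_mem _) (fun _ => trivial) (by simpa [trace_smul] using hA)
  exact ⟨u, hu, by simpa [smul_mulVec, dotProduct_smul] using him⟩

theorem exists_unitary_row_eq_star [DecidableEq ι] (i : ι) {v : ι → ℂ}
    (hv : star v ⬝ᵥ v = 1) : ∃ P ∈ unitaryGroup ι ℂ, P i = star v := by
  have hon : Orthonormal ℂ (Set.domRestrict {i} fun _ => WithLp.toLp 2 v) := by
    rw [orthonormal_iff_ite]
    rintro ⟨j, rfl⟩ ⟨k, rfl⟩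
    simp only [Set.domRestrict_apply, if_true]
    rw [EuclideanSpace.inner_eq_star_dotProduct]
    simpa [dotProduct_comm] using hv
  obtain ⟨b, hb⟩ := hon.exists_orthonormalBasis_extension_of_card_eq (by simp)
  refine ⟨star ((EuclideanSpace.basisFun ι ℂ).toBasis.toMatrix b),
    Unitary.star_mem (OrthonormalBasis.toMatrix_orthonormalBasis_mem_unitary _ _), ?_⟩
  ext j
  simp [Module.Basis.toMatrix_apply, hb i rfl]

end

theorem exists_unitary_diag_conj_eq_cons {n : ℕ} {U : Matrix (Fin n) (Fin n) ℂ}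
    (hU : U ∈ unitaryGroup (Fin n) ℂ) :
    ∃ E ∈ unitaryGroup (Fin (n + 1)) ℂ, ∀ B : Matrix (Fin (n + 1)) (Fin (n + 1)) ℂ,
      (E * B * Eᴴ).diag = Fin.cons (B 0 0) (U * B.submatrix Fin.succ Fin.succ * Uᴴ).diag := by
  have hUU (i j) : ∑ k, U i k * conj (U j k) = if i = j then 1 else 0 := by
    simpa [mul_apply, one_apply] using congrFun₂ (mem_unitaryGroup_iff.mp hU) i j
  refine ⟨of (Fin.cons (Pi.single 0 1) fun i => Fin.cons 0 (U i)), ?_, fun B => ?_⟩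
  · rw [mem_unitaryGroup_iff]
    ext i j
    cases i using Fin.cases <;> cases j using Fin.cases <;>
      simp [mul_apply, Fin.sum_univ_succ, hUU, one_apply, Pi.single_apply,
        (Fin.succ_ne_zero _).symm]
  · ext i
    cases i using Fin.cases <;> simp [mul_apply, Fin.sum_univ_succ, Pi.single_apply]

theorem exists_unitary_map_diag_eq_zero {M : Type*} [AddCommGroup M] (f : ℂ →+ M)
    (hf : ∀ (n : ℕ) (A : Matrix (Fin (n + 1)) (Fin (n + 1)) ℂ), f A.trace = 0 →
      ∃ v, star v ⬝ᵥ v = 1 ∧ f (star v ⬝ᵥ A *ᵥ v) = 0) :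
    ∀ (n : ℕ) (A : Matrix (Fin n) (Fin n) ℂ), f A.trace = 0 →
      ∃ U ∈ unitaryGroup (Fin n) ℂ, ∀ i, f ((U * A * Uᴴ) i i) = 0
  | 0, _, _ => ⟨1, one_mem _, fun i => i.elim0⟩
  | n + 1, A, hA => by
    obtain ⟨v, hv, hAv⟩ := hf n A hA
    obtain ⟨P, hP, hPv⟩ := exists_unitary_row_eq_star 0 hv
    have hB : (P * A * Pᴴ) 0 0 = star v ⬝ᵥ A *ᵥ v := by
      rw [mul_mul_conjTranspose_apply, hPv, star_star, star_star]
    have htr : f ((P * A * Pᴴ).submatrix Fin.succ Fin.succ).trace = 0 := by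
      have hBA : (P * A * Pᴴ).trace = A.trace := by
        rw [trace_mul_cycle, show Pᴴ * P = 1 from mem_unitaryGroup_iff'.mp hP, Matrix.one_mul]
      rw [← hBA, ← trace_submatrix_succ, map_add, hB, hAv, zero_add] at hA
      exact hA
    obtain ⟨U, hU, hUB⟩ := exists_unitary_map_diag_eq_zero f hf n _ htr
    obtain ⟨E, hE, hEB⟩ := exists_unitary_diag_conj_eq_cons hU
    refine ⟨E * P, mul_mem hE hP, fun i => ?_⟩
    rw [show E * P * A * (E * P)ᴴ = E * (P * A * Pᴴ) * Eᴴ by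
      simp only [conjTranspose_mul, Matrix.mul_assoc], ← diag_apply (E * _ * Eᴴ), hEB]
    cases i using Fin.cases with
    | zero => rw [Fin.cons_zero, hB, hAv]
    | succ i => rw [Fin.cons_succ]; exact hUB i

theorem exists_unit_quadForm_eq_zero {n : ℕ} (A : Matrix (Fin (n + 1)) (Fin (n + 1)) ℂ)
    (hA : A.trace = 0) : ∃ v, star v ⬝ᵥ v = 1 ∧ star v ⬝ᵥ A *ᵥ v = 0 := by
  obtain ⟨U, hU, hre⟩ := exists_unitary_map_diag_eq_zero reAddGroupHom
    (fun _ B hB => exists_unit_re_quadForm_eq_zero B hB) _ A (by simp [hA])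
  obtain ⟨u, hu, him, hre'⟩ :=
    exists_unit_quadForm_im_eq_zero_re_mem (convex_singleton 0) A hU hre (by simp [hA])
  exact ⟨u, hu, Complex.ext hre' him⟩

theorem exists_unitary_diag_eq_zero_of_trace_eq_zero {n : ℕ} (A : Matrix (Fin n) (Fin n) ℂ)
    (hA : A.trace = 0) : ∃ U ∈ unitaryGroup (Fin n) ℂ, ∀ i, (U * A * Uᴴ) i i = 0 :=
  exists_unitary_map_diag_eq_zero (AddMonoidHom.id ℂ)
    (fun _ B hB => exists_unit_quadForm_eq_zero B hB) n A hA

def padRows {R κ : Type*} [Zero R] {n : ℕ} (N : ℕ) (F : Matrix (Fin n) κ R) :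
    Matrix (Fin N) κ R :=
  of fun a b => if h : (a : ℕ) < n then F ⟨a, h⟩ b else 0

theorem trace_padRows_mul_conjTranspose {R κ : Type*} [Semiring R] [StarRing R] [Fintype κ]
    {n N : ℕ} (hnN : n ≤ N) (F G : Matrix (Fin n) κ R) :
    (padRows N F * (padRows N G)ᴴ).trace = (F * Gᴴ).trace := by
  symm
  refine Fintype.sum_of_injective (Fin.castLE hnN) (Fin.castLE_injective hnN) _ _ ?_ ?_
  · intro i hi
    have : ¬ (i : ℕ) < n := fun h => hi ⟨⟨i, h⟩, rfl⟩
    simp [padRows, mul_apply, this]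
  · intro i
    simp [padRows, mul_apply]

end Matrix

theorem exists_unitary_row_orthogonalize_general (n m : ℕ)
    (F G : Matrix (Fin n) (Fin m) ℂ) (h : (F * Gᴴ).trace = 0) :
    ∃ k : ℕ, n ≤ 2 ^ k ∧
      ∃ U ∈ Matrix.unitaryGroup (Fin (2 ^ k)) ℂ,
        ∀ i : Fin (2 ^ k),
          ((U * Matrix.of fun (a : Fin (2 ^ k)) (b : Fin m) =>
              if h : (a : ℕ) < n then F ⟨a, h⟩ b else 0) *
            (U * Matrix.of fun (a : Fin (2 ^ k)) (b : Fin m) =>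
              if h : (a : ℕ) < n then G ⟨a, h⟩ b else 0)ᴴ) i i = 0 := by
  have hn : n ≤ 2 ^ n := Nat.lt_two_pow_self.le
  obtain ⟨U, hU, hdiag⟩ := Matrix.exists_unitary_diag_eq_zero_of_trace_eq_zero
    (Matrix.padRows (2 ^ n) F * (Matrix.padRows (2 ^ n) G)ᴴ)
    (by rwa [Matrix.trace_padRows_mul_conjTranspose hn])
  exact ⟨n, hn, U, hU, fun i => by
    simpa only [Matrix.padRows, Matrix.conjTranspose_mul, Matrix.mul_assoc] using hdiag i⟩

/-- Matrix form of the main theorem: if `trace (F Gᴴ) = 0` for `n×m` coefficient matrices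
`F`, `G` (`n ≥ 1`), then Alice can pad with zero rows up to some dimension `2^k ≥ n` and
find a unitary `U` such that, after applying `U`, corresponding rows of the two padded
coefficient matrices are orthogonal: every diagonal entry of `(U F₀) (U G₀)ᴴ` is zero. -/
theorem exists_unitary_row_orthogonalize (n m : ℕ) (hn : 1 ≤ n)
    (F G : Matrix (Fin n) (Fin m) ℂ) (h : (F * Gᴴ).trace = 0) :
    ∃ k : ℕ, n ≤ 2 ^ k ∧
      ∃ U ∈ Matrix.unitaryGroup (Fin (2 ^ k)) ℂ,
        ∀ i : Fin (2 ^ k),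
          ((U * Matrix.of fun (a : Fin (2 ^ k)) (b : Fin m) =>
              if h : (a : ℕ) < n then F ⟨a, h⟩ b else 0) *
            (U * Matrix.of fun (a : Fin (2 ^ k)) (b : Fin m) =>
              if h : (a : ℕ) < n then G ⟨a, h⟩ b else 0)ᴴ) i i = 0 :=
  exists_unitary_row_orthogonalize_general n m F G h
end

section
/- Let ψ and φ be orthogonal vectors in EuclideanSpace ℂ (Fin n × Fin m) with n ≥ 1, i.e., ⟪φ, ψ⟫ = 0. Then there exist a natural number k with l := 2^k ≥ n, an orthonormal family a : Fin l → EuclideanSpace ℂ (Fin l), and families of vectors η, ν : Fin l → EuclideanSpace ℂ (Fin m), such that: (1) for all (x, y) in Fin l × Fin m, ψ'(x, y) = Σ_i (a i) x · (η i) y and φ'(x, y) = Σ_i (a i) x · (ν i) y, where ψ', φ' in EuclideanSpace ℂ (Fin l × Fin m) are the images of ψ, φ under the embedding that sets all components with first index ≥ n to zero; and (2) ⟪ν i, η i⟫ = 0 for every i in Fin l. -/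
/-!
Write `ψ_y, φ_y` for the zero-padded slices of `ψ, φ` at Bob's basis vector `y`, and let
`T = ∑_y |ψ_y⟩⟨φ_y|` on Alice's space. Then `tr T = ⟪φ, ψ⟫ = 0`, and for `η_i y = ⟪a_i, ψ_y⟫`,
`ν_i y = ⟪a_i, φ_y⟫` one has `⟪ν_i, η_i⟫ = ⟪a_i, T a_i⟫`; so it suffices to find an orthonormal
basis in which `T` has zero diagonal. In dimension two, a unitary rotation makes both diagonal
entries equal to half the trace (two intermediate value arguments produce an isotropic unit
vector of a traceless 2×2 form). In dimension `2^k` the diagonal is equalized by doing this on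
pairs, recursively, so that every diagonal entry becomes `tr T / 2^k`.
-/

open scoped ComplexInnerProductSpace InnerProductSpace
open Complex ComplexConjugate Submodule Set

theorem Continuous.exists_eq_zero_of_antiperiodic {f : ℝ → ℝ} {c : ℝ} (hf : Continuous f)
    (hc : Function.Antiperiodic f c) : ∃ x, f x = 0 := by
  have hc0 : f c = -f 0 := by simpa using hc 0
  have h0 : (0 : ℝ) ∈ Set.uIcc (f 0) (f c) := by
    rw [hc0, Set.mem_uIcc]
    rcases le_total 0 (f 0) with h | h <;> [right; left] <;> constructor <;> linarith
  obtain ⟨x, -, hx⟩ := intermediate_value_uIcc hf.continuousOn h0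
  exact ⟨x, hx⟩

theorem exists_unit_isotropic_of_traceless (a b c : ℂ) :
    ∃ z w : ℂ, conj z * z + conj w * w = 1 ∧
      conj z * z * a + conj z * w * b + conj w * z * c - conj w * w * a = 0 := by
  by_cases ha : a = 0
  · exact ⟨1, 0, by simp, by simp [ha]⟩
  set ω : ℝ → ℂ := fun θ => exp (θ * I)
  have hω : ∀ θ, conj (ω θ) * ω θ = 1 := fun θ => by
    rw [← normSq_eq_conj_mul_self, normSq_eq_norm_sq, norm_exp_ofReal_mul_I]; simp
  obtain ⟨θ, hθ⟩ : ∃ θ : ℝ, (conj a * (b * ω θ + c * conj (ω θ))).im = 0 := by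
    refine Continuous.exists_eq_zero_of_antiperiodic (c := Real.pi) (by fun_prop) fun θ => ?_
    have : ω (θ + Real.pi) = -ω θ := by simp [ω, add_mul, exp_add]
    simp only [this, map_neg]
    rw [← neg_im]; ring_nf
  set r := (conj a * (b * ω θ + c * conj (ω θ))).re
  have hr : conj a * (b * ω θ + c * conj (ω θ)) = r := Complex.ext rfl hθ
  obtain ⟨t, ht⟩ : ∃ t : ℝ,
      normSq a * (Real.cos t ^ 2 - Real.sin t ^ 2) + Real.cos t * Real.sin t * r = 0 := by
    refine Continuous.exists_eq_zero_of_antiperiodic (c := Real.pi / 2) (by fun_prop) fun t => ?_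
    simp only [Real.cos_add_pi_div_two, Real.sin_add_pi_div_two]
    ring
  have hcs : (Real.cos t : ℂ) ^ 2 + (Real.sin t : ℂ) ^ 2 = 1 := by
    exact_mod_cast Real.cos_sq_add_sin_sq t
  have htC : (normSq a : ℂ) * ((Real.cos t : ℂ) ^ 2 - (Real.sin t : ℂ) ^ 2)
      + Real.cos t * Real.sin t * r = 0 := by exact_mod_cast ht
  refine ⟨Real.cos t, ω θ * Real.sin t, ?_, ?_⟩
  · simp only [map_mul, conj_ofReal]
    linear_combination (Real.sin t : ℂ) ^ 2 * hω θ + hcs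
  · suffices conj a * (conj (Real.cos t : ℂ) * Real.cos t * a
        + conj (Real.cos t : ℂ) * (ω θ * Real.sin t) * b + conj (ω θ * Real.sin t) * Real.cos t * c
        - conj (ω θ * Real.sin t) * (ω θ * Real.sin t) * a) = 0 from
      (mul_eq_zero.mp this).resolve_left (by simpa using ha)
    simp only [map_mul, conj_ofReal]
    linear_combination htC + Real.cos t * Real.sin t * hr - conj a * a * Real.sin t ^ 2 * hω θ
      - ((Real.cos t : ℂ) ^ 2 - (Real.sin t : ℂ) ^ 2) * normSq_eq_conj_mul_self (z := a)

section

variable {𝕜 E : Type*} [RCLike 𝕜] [NormedAddCommGroup E] [InnerProductSpace 𝕜 E]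

theorem Orthonormal.uncurry_of_mem_span {ι κ : Type*} {v u : κ → ι → E}
    (hv : Orthonormal 𝕜 (Function.uncurry v)) (hu : ∀ j, Orthonormal 𝕜 (u j))
    (hspan : ∀ j i, u j i ∈ span 𝕜 (range (v j))) : Orthonormal 𝕜 (Function.uncurry u) := by
  classical
  rw [orthonormal_iff_ite]
  rintro ⟨j, i⟩ ⟨j', i'⟩
  by_cases hj : j = j'
  · subst hj
    simp [Function.uncurry, orthonormal_iff_ite.mp (hu j)]
  · have hortho : span 𝕜 (range (v j)) ⟂ span 𝕜 (range (v j')) := by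
      rw [isOrtho_span]
      rintro _ ⟨a, rfl⟩ _ ⟨b, rfl⟩
      exact hv.inner_eq_zero (i := (j, a)) (j := (j', b)) (by simp [hj])
    simp [Function.uncurry, hj, hortho.inner_eq (hspan j i) (hspan j' i')]

theorem Orthonormal.rotate_fin_two {v : Fin 2 → E} (hv : Orthonormal 𝕜 v) {z w : 𝕜}
    (hzw : conj z * z + conj w * w = 1) :
    Orthonormal 𝕜 ![z • v 0 + w • v 1, -conj w • v 0 + conj z • v 1] := by
  have h := orthonormal_iff_ite.mp hv
  have h00 := h 0 0
  have h01 := h 0 1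
  have h10 := h 1 0
  have h11 := h 1 1
  simp only [Fin.isValue, if_true, zero_ne_one, one_ne_zero, if_false] at h00 h01 h10 h11
  rw [orthonormal_iff_ite]
  intro i j
  fin_cases i <;> fin_cases j <;>
    simp only [Fin.isValue, Matrix.cons_val_zero, Matrix.cons_val_one, Fin.zero_eta, Fin.mk_one,
      inner_add_left, inner_add_right, inner_smul_left, inner_smul_right, map_neg,
      RCLike.conj_conj, h00, h01, h10, h11, if_true, zero_ne_one, one_ne_zero, if_false]
  · linear_combination hzw
  · ring
  · ring
  · linear_combination hzw

theorem OrthonormalBasis.apply_eq_sum_mul_inner {ι κ : Type*} [Fintype ι] [Fintype κ]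
    (b : OrthonormalBasis ι 𝕜 (EuclideanSpace 𝕜 κ)) (f : EuclideanSpace 𝕜 κ) (x : κ) :
    f x = ∑ i, b i x * ⟪b i, f⟫_𝕜 := by
  conv_lhs => rw [← b.sum_repr' f]
  simp [mul_comm]

end

variable {E : Type*} [NormedAddCommGroup E] [InnerProductSpace ℂ E]

/-- The span condition keeps rotations of disjoint blocks of an orthonormal family mutually
orthogonal. -/
def DiagonalEqualizable (T : E →ₗ[ℂ] E) (ι : Type*) [Fintype ι] : Prop :=
  ∀ v : ι → E, Orthonormal ℂ v → ∃ u : ι → E, Orthonormal ℂ u ∧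
    (∀ i, u i ∈ span ℂ (range v)) ∧ ∀ i, Fintype.card ι * ⟪u i, T (u i)⟫ = ∑ j, ⟪v j, T (v j)⟫

namespace DiagonalEqualizable

variable (T : E →ₗ[ℂ] E)

theorem of_unique (ι : Type*) [Fintype ι] [Unique ι] : DiagonalEqualizable T ι := fun v hv =>
  ⟨v, hv, fun i => subset_span ⟨i, rfl⟩, fun i => by simp [Unique.eq_default i]⟩

theorem fin_two : DiagonalEqualizable T (Fin 2) := by
  intro v hv
  obtain ⟨z, w, hzw, hq⟩ := exists_unit_isotropic_of_traceless
    ((⟪v 0, T (v 0)⟫ - ⟪v 1, T (v 1)⟫) / 2) ⟪v 0, T (v 1)⟫ ⟪v 1, T (v 0)⟫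
  refine ⟨_, hv.rotate_fin_two hzw, fun i => ?_, fun i => ?_⟩
  · have h0 : v 0 ∈ span ℂ (range v) := subset_span ⟨0, rfl⟩
    have h1 : v 1 ∈ span ℂ (range v) := subset_span ⟨1, rfl⟩
    fin_cases i <;> exact add_mem (smul_mem _ _ h0) (smul_mem _ _ h1)
  · fin_cases i <;>
      simp only [Fintype.card_fin, Nat.cast_ofNat, Fin.isValue, Fin.zero_eta, Fin.mk_one,
        Matrix.cons_val_zero, Matrix.cons_val_one, Fin.sum_univ_two, map_add, map_smul, map_neg,
        inner_add_left, inner_add_right, inner_smul_left, inner_smul_right, inner_neg_left,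
        inner_neg_right, neg_smul, RCLike.conj_conj]
    · linear_combination 2 * hq + (⟪v 0, T (v 0)⟫ + ⟪v 1, T (v 1)⟫) * hzw
    · linear_combination -2 * hq + (⟪v 0, T (v 0)⟫ + ⟪v 1, T (v 1)⟫) * hzw

variable {T}

theorem prod {ι κ : Type*} [Fintype ι] [Fintype κ] (h₁ : DiagonalEqualizable T ι)
    (h₂ : DiagonalEqualizable T κ) : DiagonalEqualizable T (ι × κ) := by
  intro v hv
  choose u₁ hu₁ hspan₁ hdiag₁ using fun j : κ =>
    h₁ (fun i => v (i, j)) (hv.comp _ fun _ _ h => congrArg Prod.fst h)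
  have hu₁' : Orthonormal ℂ (Function.uncurry u₁) :=
    Orthonormal.uncurry_of_mem_span (v := fun j i => v (i, j))
      (hv.comp Prod.swap Prod.swap_injective) hu₁ hspan₁
  choose u₂ hu₂ hspan₂ hdiag₂ using fun i : ι =>
    h₂ (fun j => u₁ j i) (hu₁'.comp (fun j => (j, i)) fun _ _ h => congrArg Prod.fst h)
  refine ⟨Function.uncurry u₂, Orthonormal.uncurry_of_mem_span (v := fun i j => u₁ j i)
    (hu₁'.comp Prod.swap Prod.swap_injective) hu₂ hspan₂, ?_, ?_⟩
  · rintro ⟨i, j⟩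
    refine span_le.mpr ?_ (hspan₂ i j)
    rintro _ ⟨j', rfl⟩
    exact span_mono (range_comp_subset_range _ v) (hspan₁ j' i)
  · rintro ⟨i, j⟩
    calc (Fintype.card (ι × κ) : ℂ) * ⟪u₂ i j, T (u₂ i j)⟫
        = Fintype.card ι * (Fintype.card κ * ⟪u₂ i j, T (u₂ i j)⟫) := by
          rw [Fintype.card_prod]; push_cast; ring
      _ = ∑ j', Fintype.card ι * ⟪u₁ j' i, T (u₁ j' i)⟫ := by rw [hdiag₂, Finset.mul_sum]
      _ = ∑ x, ⟪v x, T (v x)⟫ := by simp only [hdiag₁, Fintype.sum_prod_type_right]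

theorem of_equiv {ι κ : Type*} [Fintype ι] [Fintype κ] (e : ι ≃ κ)
    (h : DiagonalEqualizable T ι) : DiagonalEqualizable T κ := by
  intro v hv
  obtain ⟨u, hu, hspan, hdiag⟩ := h (v ∘ e) (hv.comp e e.injective)
  refine ⟨u ∘ e.symm, hu.comp _ e.symm.injective, fun i => ?_, fun i => ?_⟩
  · simpa [EquivLike.range_comp] using hspan (e.symm i)
  · rw [← Fintype.card_congr e, Function.comp_apply, hdiag, ← e.sum_comp]
    rfl

variable (T) in
theorem fin_two_pow : ∀ k : ℕ, DiagonalEqualizable T (Fin (2 ^ k))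
  | 0 => of_unique T (Fin 1)
  | k + 1 => ((fin_two T).prod (fin_two_pow k)).of_equiv
      (finProdFinEquiv.trans (finCongr (pow_succ' 2 k).symm))

end DiagonalEqualizable

theorem LinearMap.exists_orthonormalBasis_inner_map_self_eq_trace_div [FiniteDimensional ℂ E]
    {k : ℕ} (hk : Module.finrank ℂ E = 2 ^ k) (T : E →ₗ[ℂ] E) :
    ∃ b : OrthonormalBasis (Fin (2 ^ k)) ℂ E, ∀ i, ⟪b i, T (b i)⟫ = T.trace ℂ E / 2 ^ k := by
  let b₀ := (stdOrthonormalBasis ℂ E).reindex (finCongr hk)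
  obtain ⟨u, hu, -, hdiag⟩ := DiagonalEqualizable.fin_two_pow T k b₀ b₀.orthonormal
  refine ⟨OrthonormalBasis.mk hu
    (hu.linearIndependent.span_eq_top_of_card_eq_finrank' (by simp [hk])).ge, fun i => ?_⟩
  rw [OrthonormalBasis.coe_mk, T.trace_eq_sum_inner b₀, ← hdiag i]
  simp

def paddedSlice {n m : ℕ} (l : ℕ) (ψ : EuclideanSpace ℂ (Fin n × Fin m)) (y : Fin m) :
    EuclideanSpace ℂ (Fin l) :=
  WithLp.toLp 2 fun x => if h : (x : ℕ) < n then ψ (⟨x, h⟩, y) else 0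

theorem sum_inner_paddedSlice {n m l : ℕ} (hnl : n ≤ l) (φ ψ : EuclideanSpace ℂ (Fin n × Fin m)) :
    ∑ y, ⟪paddedSlice l φ y, paddedSlice l ψ y⟫ = ⟪φ, ψ⟫ := by
  rw [PiLp.inner_apply, Fintype.sum_prod_type_right]
  refine Finset.sum_congr rfl fun y _ => ?_
  rw [PiLp.inner_apply]
  refine (Fintype.sum_of_injective (Fin.castLE hnl) (Fin.castLE_injective hnl) _ _ ?_ ?_).symm
  · intro x hx
    have : ¬ (x : ℕ) < n := fun h => hx ⟨⟨x, h⟩, rfl⟩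
    simp [paddedSlice, this]
  · intro x
    simp [paddedSlice]

theorem orthogonal_states_locally_distinguishable_general (n m : ℕ)
    (ψ φ : EuclideanSpace ℂ (Fin n × Fin m)) (h : ⟪φ, ψ⟫ = 0) :
    ∃ k : ℕ, n ≤ 2 ^ k ∧
      ∃ a : Fin (2 ^ k) → EuclideanSpace ℂ (Fin (2 ^ k)),
        Orthonormal ℂ a ∧
        ∃ η ν : Fin (2 ^ k) → EuclideanSpace ℂ (Fin m),
          (∀ (x : Fin (2 ^ k)) (y : Fin m),
            (if h : (x : ℕ) < n then ψ (⟨(x : ℕ), h⟩, y) else 0) =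
              ∑ i : Fin (2 ^ k), a i x * η i y) ∧
          (∀ (x : Fin (2 ^ k)) (y : Fin m),
            (if h : (x : ℕ) < n then φ (⟨(x : ℕ), h⟩, y) else 0) =
              ∑ i : Fin (2 ^ k), a i x * ν i y) ∧
          (∀ i : Fin (2 ^ k), ⟪ν i, η i⟫ = 0) := by
  have hn : n ≤ 2 ^ n := Nat.lt_two_pow_self.le
  let Ψ := paddedSlice (2 ^ n) ψ
  let Φ := paddedSlice (2 ^ n) φ
  let T : EuclideanSpace ℂ (Fin (2 ^ n)) →ₗ[ℂ] EuclideanSpace ℂ (Fin (2 ^ n)) :=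
    ∑ y, (InnerProductSpace.rankOne ℂ (Ψ y) (Φ y)).toLinearMap
  have hT : T.trace ℂ _ = 0 := by
    rw [← h, ← sum_inner_paddedSlice hn]
    simp [T, Ψ, Φ, map_sum, InnerProductSpace.trace_rankOne]
  obtain ⟨b, hb⟩ := T.exists_orthonormalBasis_inner_map_self_eq_trace_div finrank_euclideanSpace_fin
  refine ⟨n, hn, b, b.orthonormal, fun i => WithLp.toLp 2 fun y => ⟪b i, Ψ y⟫,
    fun i => WithLp.toLp 2 fun y => ⟪b i, Φ y⟫, fun x y => b.apply_eq_sum_mul_inner (Ψ y) x,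
    fun x y => b.apply_eq_sum_mul_inner (Φ y) x, fun i => ?_⟩
  calc _ = ⟪b i, T (b i)⟫ := by
        simp [T, PiLp.inner_apply, mul_comm]
    _ = 0 := by rw [hb, hT, zero_div]

/-- State-vector form of the main theorem: two orthogonal bipartite states `ψ`, `φ`
(Alice dimension `n ≥ 1`, Bob dimension `m`) can, after enlarging Alice's space to
dimension `l = 2^k ≥ n` by zero-padding, be written as `ψ' = Σ_i |a_i⟩|η_i⟩` and
`φ' = Σ_i |a_i⟩|ν_i⟩` with `{a_i}` an orthonormal family and `⟪ν_i, η_i⟫ = 0` for all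
`i`: Alice measures in the basis `{a_i}` and Bob finishes the discrimination locally. -/
theorem orthogonal_states_locally_distinguishable (n m : ℕ) (hn : 1 ≤ n)
    (ψ φ : EuclideanSpace ℂ (Fin n × Fin m)) (h : ⟪φ, ψ⟫ = 0) :
    ∃ k : ℕ, n ≤ 2 ^ k ∧
      ∃ a : Fin (2 ^ k) → EuclideanSpace ℂ (Fin (2 ^ k)),
        Orthonormal ℂ a ∧
        ∃ η ν : Fin (2 ^ k) → EuclideanSpace ℂ (Fin m),
          (∀ (x : Fin (2 ^ k)) (y : Fin m),
            (if h : (x : ℕ) < n then ψ (⟨(x : ℕ), h⟩, y) else 0) =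
              ∑ i : Fin (2 ^ k), a i x * η i y) ∧
          (∀ (x : Fin (2 ^ k)) (y : Fin m),
            (if h : (x : ℕ) < n then φ (⟨(x : ℕ), h⟩, y) else 0) =
              ∑ i : Fin (2 ^ k), a i x * ν i y) ∧
          (∀ i : Fin (2 ^ k), ⟪ν i, η i⟫ = 0) :=
  orthogonal_states_locally_distinguishable_general n m ψ φ h
end
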